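/- arXiv:math/0404325 — 2 statements merged into one kernel-verified Lean document; each statement's English description precedes it below -/
import Mathlib

section
/- Let n and d be positive integers with 2 ≤ d ≤ n. If u and v are vertices of the Hamming sphere graph G_S with wt(v) ≤ wt(u) (where wt denotes Hamming weight), then the degree of v in G_S is at least the degree of u in G_S. -/
/-!
With `r = d - 1`, the neighbours of `u` in the sphere graph are the common neighbours of `0` and
`u` in the Gilbert graph, i.e. the lens `{w | |w| ≤ r, d(w, u) ≤ r}` with `0` and `u` removed.
So it suffices that the size of this lens does not increase with `|u|`. It is invariant under
permutations of the coordinates, so it depends on `|u|` only, and removing a coordinate `p` from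
the support of `u` cannot shrink it: pair each `w` with `w + eₚ`. Since `u p = 1`, this flip
changes `|w|` and `d(w, u)` by opposite amounts, and then each pair meets the lens of `u + eₚ`
at least as often as the lens of `u`.
-/

open Finset

/-- The Gilbert graph: vertices are `𝔽₂ⁿ`, two distinct vertices adjacent iff
their Hamming distance is at most `d - 1`. -/
def gilbertGraph (n d : ℕ) : SimpleGraph (Fin n → ZMod 2) where
  Adj u v := u ≠ v ∧ hammingDist u v ≤ d - 1
  symm := ⟨fun u v h => ⟨h.1.symm, by rw [hammingDist_comm]; exact h.2⟩⟩
  loopless := ⟨fun u h => h.1 rfl⟩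

/-- The Hamming sphere graph: the subgraph of the Gilbert graph induced by the
neighborhood of the all-zero vector. -/
def sphereGraph (n d : ℕ) : SimpleGraph ((gilbertGraph n d).neighborSet 0) :=
  (gilbertGraph n d).induce ((gilbertGraph n d).neighborSet 0)

lemma card_filter_le_card_filter_of_perm {α : Type*} [Fintype α] (σ : Equiv.Perm α)
    {P Q : α → Prop} [DecidablePred P] [DecidablePred Q]
    (h : ∀ a, (if P a then 1 else 0) + (if P (σ a) then 1 else 0) ≤
      (if Q a then 1 else 0) + (if Q (σ a) then 1 else 0)) :
    #{a | P a} ≤ #{a | Q a} := by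
  have hsum := sum_le_sum fun a (_ : a ∈ univ) => h a
  simp only [sum_add_distrib, Equiv.sum_comp σ fun a => if P a then 1 else 0,
    Equiv.sum_comp σ fun a => if Q a then 1 else 0] at hsum
  rw [card_filter, card_filter]
  omega

lemma ite_and_add_ite_and_le {a b a' b' r : ℕ} (h : a + b = a' + b') :
    (if a ≤ r ∧ b ≤ r then 1 else 0) + (if a' ≤ r ∧ b' ≤ r then 1 else 0) ≤
      (if a ≤ r ∧ b' ≤ r then 1 else 0) + (if a' ≤ r ∧ b ≤ r then 1 else 0) := by
  split_ifs <;> omega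

lemma SimpleGraph.ncard_neighborSet_induce_neighborSet {V : Type*} (G : SimpleGraph V) (x : V)
    (u : G.neighborSet x) :
    ((G.induce (G.neighborSet x)).neighborSet u).ncard = (G.commonNeighbors x u).ncard := by
  rw [← Set.ncard_image_of_injective _ Subtype.val_injective]
  congr 1
  ext w
  simp [mem_commonNeighbors, and_comm]

section Hamming

variable {ι : Type*} [Fintype ι]

lemma hammingDist_comp_perm {β : Type*} [DecidableEq β] (x y : ι → β) (π : Equiv.Perm ι) :
    hammingDist (x ∘ π) (y ∘ π) = hammingDist x y :=
  card_equiv π fun i => by simp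

lemma hammingNorm_comp_perm {β : Type*} [Zero β] [DecidableEq β] (x : ι → β)
    (π : Equiv.Perm ι) : hammingNorm (x ∘ π) = hammingNorm x :=
  card_equiv π fun i => by simp

lemma hammingDist_add_add_right {β : Type*} [AddCommGroup β] [DecidableEq β] (x y c : ι → β) :
    hammingDist (x + c) (y + c) = hammingDist x y := by
  rw [hammingDist_eq_hammingNorm, hammingDist_eq_hammingNorm]
  congr 1
  abel

lemma hammingDist_add_left_eq_add_right (x y c : ι → ZMod 2) :
    hammingDist (x + c) y = hammingDist x (y + c) := by
  have hneg (z : ι → ZMod 2) : -z = z := funext fun i => ZMod.neg_eq_self_mod_two (z i)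
  rw [hammingDist_eq_hammingNorm, hammingDist_eq_hammingNorm, hneg, hneg, add_right_comm,
    add_assoc]

lemma exists_perm_comp_eq_of_hammingNorm_eq {u v : ι → ZMod 2}
    (h : hammingNorm v = hammingNorm u) : ∃ π : Equiv.Perm ι, v = u ∘ π := by
  have hsupp : Fintype.card {i // v i ≠ 0} = Fintype.card {i // u i ≠ 0} := by
    rw [Fintype.card_subtype, Fintype.card_subtype]
    exact h
  have hzero : Fintype.card {i // ¬v i ≠ 0} = Fintype.card {i // ¬u i ≠ 0} := by
    simp only [Fintype.card_subtype_compl, hsupp]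
  refine ⟨Equiv.subtypeCongr (Fintype.equivOfCardEq hsupp) (Fintype.equivOfCardEq hzero),
    funext fun i => ?_⟩
  have hbool : ∀ a b : ZMod 2, (a ≠ 0 ↔ b ≠ 0) → a = b := by decide
  apply hbool
  by_cases hi : v i = 0
  · simpa [Equiv.subtypeCongr, Equiv.sumCompl, hi] using
      (Fintype.equivOfCardEq hzero ⟨i, not_not.mpr hi⟩).2
  · simpa [Equiv.subtypeCongr, Equiv.sumCompl, hi] using (Fintype.equivOfCardEq hsupp ⟨i, hi⟩).2

variable [DecidableEq ι]

lemma hammingNorm_add_hammingDist_add_single {u : ι → ZMod 2} {p : ι} (hp : u p ≠ 0)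
    (w : ι → ZMod 2) :
    hammingNorm (w + Pi.single p 1) + hammingDist (w + Pi.single p 1) u =
      hammingNorm w + hammingDist w u := by
  simp only [hammingNorm, hammingDist, card_filter, ← sum_add_distrib]
  refine sum_congr rfl fun i _ => ?_
  rcases eq_or_ne i p with rfl | hi
  · have hflip : ∀ a b : ZMod 2, b ≠ 0 →
        (if a + 1 ≠ 0 then 1 else 0) + (if a + 1 ≠ b then 1 else 0) =
          (if a ≠ 0 then 1 else 0) + (if a ≠ b then 1 else 0) := by decide
    simpa using hflip (w i) (u i) hp
  · simp [Pi.single_eq_of_ne hi]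

lemma hammingNorm_add_single_add_one {u : ι → ZMod 2} {p : ι} (hp : u p ≠ 0) :
    hammingNorm (u + Pi.single p 1) + 1 = hammingNorm u := by
  have h := hammingNorm_add_hammingDist_add_single hp u
  have hsingle : hammingNorm (Pi.single p 1 : ι → ZMod 2) = 1 := by
    simp [hammingNorm, Pi.single_apply, filter_eq']
  have hdist := hammingDist_add_add_right (Pi.single p 1) 0 u
  rw [zero_add, add_comm, hammingDist_zero_right, hsingle] at hdist
  rwa [hdist, hammingDist_self, add_zero] at h

def hammingLens (r : ℕ) (u : ι → ZMod 2) : Finset (ι → ZMod 2) :=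
  {w | hammingNorm w ≤ r ∧ hammingDist w u ≤ r}

lemma card_hammingLens_comp_perm (r : ℕ) (u : ι → ZMod 2) (π : Equiv.Perm ι) :
    #(hammingLens r (u ∘ π)) = #(hammingLens r u) := by
  have hmem (w : ι → ZMod 2) : w ∘ π ∈ hammingLens r (u ∘ π) ↔ w ∈ hammingLens r u := by
    simp only [hammingLens, mem_filter, mem_univ, true_and, hammingNorm_comp_perm,
      hammingDist_comp_perm]
  refine card_nbij' (· ∘ π.symm) (· ∘ π) (fun w hw => ?_) (fun w hw => (hmem w).2 hw)
    (fun w _ => ?_) (fun w _ => ?_)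
  · rw [mem_coe, ← hmem]
    simpa [Function.comp_assoc] using hw
  all_goals simp [Function.comp_assoc]

lemma card_hammingLens_le_add_single (r : ℕ) {u : ι → ZMod 2} {p : ι} (hp : u p ≠ 0) :
    #(hammingLens r u) ≤ #(hammingLens r (u + Pi.single p 1)) := by
  refine card_filter_le_card_filter_of_perm (Equiv.addRight (Pi.single p 1)) fun w => ?_
  have h := hammingNorm_add_hammingDist_add_single hp w
  rw [hammingDist_add_left_eq_add_right] at h
  simp only [Equiv.coe_addRight, hammingDist_add_add_right w u,
    hammingDist_add_left_eq_add_right w u]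
  exact ite_and_add_ite_and_le h.symm

theorem card_hammingLens_le_of_hammingNorm_le (r : ℕ) {u v : ι → ZMod 2}
    (h : hammingNorm v ≤ hammingNorm u) : #(hammingLens r u) ≤ #(hammingLens r v) := by
  induction hk : hammingNorm u - hammingNorm v generalizing u with
  | zero =>
    obtain ⟨π, rfl⟩ := exists_perm_comp_eq_of_hammingNorm_eq (u := u) (v := v) (by omega)
    rw [card_hammingLens_comp_perm]
  | succ k ih =>
    obtain ⟨p, hp⟩ := Function.ne_iff.mp (hammingNorm_ne_zero_iff.mp (by omega : hammingNorm u ≠ 0))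
    have hnorm := hammingNorm_add_single_add_one hp
    exact (card_hammingLens_le_add_single r hp).trans (ih (by omega) (by omega))

end Hamming

lemma ncard_commonNeighbors_gilbertGraph_add_two {n d : ℕ} {u : Fin n → ZMod 2}
    (hu : (gilbertGraph n d).Adj 0 u) :
    ((gilbertGraph n d).commonNeighbors 0 u).ncard + 2 = #(hammingLens (d - 1) u) := by
  have hnorm : hammingNorm u ≤ d - 1 := by simpa using hu.2
  have hcommon : (gilbertGraph n d).commonNeighbors 0 u =
      ↑(((hammingLens (d - 1) u).erase 0).erase u) := by
    ext w
    simp only [SimpleGraph.mem_commonNeighbors, gilbertGraph, hammingLens, coe_erase,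
      coe_filter, mem_univ, true_and, Set.mem_sdiff, Set.mem_ofPred_eq, Set.mem_singleton_iff,
      hammingDist_zero_left, hammingDist_comm u w]
    tauto
  have hzero : 0 ∈ hammingLens (d - 1) u := by simpa [hammingLens] using hnorm
  have hself : u ∈ (hammingLens (d - 1) u).erase 0 := by simpa [hammingLens, hnorm] using hu.1.symm
  rw [hcommon, Set.ncard_coe_finset, ← card_erase_add_one hzero, ← card_erase_add_one hself]

theorem statement9_general (n d : ℕ)
    (u v : (gilbertGraph n d).neighborSet 0)
    (h : hammingNorm (v : Fin n → ZMod 2) ≤ hammingNorm (u : Fin n → ZMod 2)) :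
    ((sphereGraph n d).neighborSet u).ncard ≤ ((sphereGraph n d).neighborSet v).ncard := by
  have hu := ncard_commonNeighbors_gilbertGraph_add_two u.2
  have hv := ncard_commonNeighbors_gilbertGraph_add_two v.2
  have hlens := card_hammingLens_le_of_hammingNorm_le (d - 1) h
  rw [sphereGraph, SimpleGraph.ncard_neighborSet_induce_neighborSet,
    SimpleGraph.ncard_neighborSet_induce_neighborSet]
  omega

theorem statement9 (n d : ℕ) (hd : 2 ≤ d) (hdn : d ≤ n)
    (u v : (gilbertGraph n d).neighborSet 0)
    (h : hammingNorm (v : Fin n → ZMod 2) ≤ hammingNorm (u : Fin n → ZMod 2)) :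
    ((sphereGraph n d).neighborSet u).ncard ≤ ((sphereGraph n d).neighborSet v).ncard :=
  statement9_general n d u v h
end

section
/- Let n and d be integers with 3 ≤ d ≤ n−2, and set δ = (d−1)/n. Define f_GV(n,d) = 2ⁿ / V(n,d−1) and f_E(n,d) = 2^{n−2} / max{ 2^{⌊log₂ V(n−3,d−2)⌋}, 2^{⌊log₂ V(n−2,d−3)⌋} }. Then f_E(n,d) / f_GV(n,d) ≤ 4/δ. -/
open Finset

/-- Volume of a Hamming ball of radius `d` in `𝔽₂ⁿ`. -/
def V (n d : ℕ) : ℕ := ∑ i ∈ Finset.range (d + 1), n.choose i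

/-- The Gilbert–Varshamov lower bound `f_GV(n,d) = 2ⁿ / V(n,d-1)`. -/
noncomputable def fGV (n d : ℕ) : ℝ := (2 : ℝ) ^ n / (V n (d - 1) : ℝ)

/-- The Elia lower bound. -/
noncomputable def fE (n d : ℕ) : ℝ :=
  (2 : ℝ) ^ (n - 2) /
    max ((2 : ℝ) ^ (⌊Real.logb 2 (V (n - 3) (d - 2) : ℝ)⌋))
        ((2 : ℝ) ^ (⌊Real.logb 2 (V (n - 2) (d - 3) : ℝ)⌋))

/-!
Only the first term of the maximum in `f_E` matters: `2 ^ ⌊log₂ x⌋ > x / 2`, so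
`f_E(n,d) / f_GV(n,d) ≤ V(n,d-1) / (2 V(n-3,d-2))`. Three applications of Pascal's rule give
`V(m+3,r+1) ≤ 8 V(m,r) + C(m,r+1)`, and `(r+1) C(m,r+1) = (m-r) C(m,r) ≤ (m-r) V(m,r)`, whence
`(r+1) V(m+3,r+1) ≤ 8 (m+3) V(m,r)`; with `m = n-3`, `r = d-2` this is the claimed bound.
-/

lemma V_succ_right (n d : ℕ) : V n (d + 1) = V n d + n.choose (d + 1) :=
  sum_range_succ _ _

lemma V_mono (n : ℕ) {d e : ℕ} (h : d ≤ e) : V n d ≤ V n e :=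
  sum_le_sum_of_subset (range_subset_range.mpr (by omega))

lemma choose_le_V (n d : ℕ) : n.choose d ≤ V n d :=
  single_le_sum (fun _ _ => Nat.zero_le _) (self_mem_range_succ d)

lemma one_le_V (n d : ℕ) : 1 ≤ V n d := by
  simpa using choose_le_V n 0 |>.trans (V_mono n (Nat.zero_le d))

lemma V_succ_succ (n r : ℕ) : V (n + 1) (r + 1) = V n r + V n (r + 1) := by
  simp only [V, sum_range_succ' (fun i => (n + 1).choose i), Nat.choose_succ_succ', sum_add_distrib,
    sum_range_succ' (fun i => n.choose i) (r + 1), Nat.choose_zero_right]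
  ring

lemma V_succ_le (n s : ℕ) : V (n + 1) s ≤ V n (s - 1) + V n s := by
  cases s with
  | zero => simp [V]
  | succ r => rw [V_succ_succ, Nat.add_sub_cancel]

lemma V_add_three_le (m r : ℕ) : V (m + 3) (r + 1) ≤ 8 * V m r + m.choose (r + 1) := by
  have h1 : V (m + 3) (r + 1) ≤ V (m + 2) r + V (m + 2) (r + 1) := V_succ_le (m + 2) (r + 1)
  have h2 : V (m + 2) (r + 1) ≤ V (m + 1) r + V (m + 1) (r + 1) := V_succ_le (m + 1) (r + 1)
  have h3 : V (m + 2) r ≤ V (m + 1) (r - 1) + V (m + 1) r := V_succ_le (m + 1) r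
  have h4 : V (m + 1) (r + 1) ≤ V m r + V m (r + 1) := V_succ_le m (r + 1)
  have h5 : V (m + 1) r ≤ V m (r - 1) + V m r := V_succ_le m r
  have h6 : V (m + 1) (r - 1) ≤ V m (r - 1 - 1) + V m (r - 1) := V_succ_le m (r - 1)
  have h7 : V m (r - 1) ≤ V m r := V_mono m (Nat.sub_le r 1)
  have h8 : V m (r - 1 - 1) ≤ V m r := V_mono m (by omega)
  have h9 : V m (r + 1) = V m r + m.choose (r + 1) := V_succ_right m r
  omega

lemma succ_mul_V_add_three_le {m r : ℕ} (h : r ≤ m + 2) :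
    (r + 1) * V (m + 3) (r + 1) ≤ 8 * (m + 3) * V m r := by
  have hchoose : m.choose (r + 1) * (r + 1) ≤ V m r * (m - r) :=
    Nat.choose_succ_right_eq m r ▸ Nat.mul_le_mul_right _ (choose_le_V m r)
  calc (r + 1) * V (m + 3) (r + 1) ≤ (r + 1) * (8 * V m r + m.choose (r + 1)) :=
        Nat.mul_le_mul_left _ (V_add_three_le m r)
    _ ≤ V m r * (8 * (r + 1) + (m - r)) := by nlinarith
    _ ≤ V m r * (8 * (m + 3)) := Nat.mul_le_mul_left _ (by omega)
    _ = 8 * (m + 3) * V m r := mul_comm _ _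

lemma half_lt_two_zpow_floor_logb {x : ℝ} (hx : 0 ≤ x) : x / 2 < 2 ^ ⌊Real.logb 2 x⌋ := by
  have h := Int.lt_zpow_succ_log_self (R := ℝ) (b := 2) one_lt_two x
  rw [← Real.floor_logb_natCast hx, zpow_add_one₀ (by norm_num)] at h
  push_cast at h
  linarith

lemma fE_le (n d : ℕ) : fE n d ≤ 2 ^ (n - 2) / (V (n - 3) (d - 2) / 2) := by
  have hV : (0 : ℝ) < V (n - 3) (d - 2) := by exact_mod_cast one_le_V _ _
  refine div_le_div_of_nonneg_left (by positivity) (by positivity) ?_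
  exact (half_lt_two_zpow_floor_logb hV.le).le.trans (le_max_left _ _)

theorem statement15 (n d : ℕ) (hd : 3 ≤ d) (hdn : d ≤ n - 2) :
    fE n d / fGV n d ≤ 4 / (((d : ℝ) - 1) / n) := by
  obtain ⟨m, rfl⟩ : ∃ m, n = m + 3 := ⟨n - 3, by omega⟩
  obtain ⟨r, rfl⟩ : ∃ r, d = r + 2 := ⟨d - 2, by omega⟩
  have hball : ((r + 1 : ℕ) : ℝ) * V (m + 3) (r + 1) ≤ 8 * (m + 3 : ℕ) * V m r := by
    exact_mod_cast succ_mul_V_add_three_le (by omega)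
  have hV : (0 : ℝ) < V m r := by exact_mod_cast one_le_V m r
  have hfE := fE_le (m + 3) (r + 2)
  simp only [fGV, Nat.add_sub_cancel, show m + 3 - 2 = m + 1 by omega] at hfE ⊢
  push_cast at hball ⊢
  have hA : (0 : ℝ) < V (m + 3) (r + 1) := by exact_mod_cast one_le_V _ _
  calc fE (m + 3) (r + 2) / (2 ^ (m + 3) / V (m + 3) (r + 1))
      ≤ 2 ^ (m + 1) / (V m r / 2) / (2 ^ (m + 3) / V (m + 3) (r + 1)) := by gcongr
    _ = V (m + 3) (r + 1) / (2 * V m r) := by field_simp; ring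
    _ ≤ 4 / ((r + 2 - 1) / (m + 3)) := by
      rw [show (r : ℝ) + 2 - 1 = r + 1 by ring, div_div_eq_mul_div,
        div_le_div_iff₀ (by positivity) (by positivity)]
      linarith
end
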